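/- There is a universal constant C ≥ 1 such that for all unit vectors s₁, s₂ ∈ S¹ ⊂ ℝ², all t₁, t₂ ≥ 0, and the points w₁ = (t₁s₁, 0), w₂ = (t₂s₂, 0) ∈ ℝ³ in the plane {z = 0}, one has C⁻¹ (|t₁ − t₂| + min(t₁,t₂)|s₁ − s₂|^{1/2}) ≤ d_H(w₁, w₂) ≤ C (|t₁ − t₂| + min(t₁,t₂)|s₁ − s₂|^{1/2}), where |s₁ − s₂| is the Euclidean distance in ℝ². -/

import Mathlib

noncomputable section

open Real Set

abbrev E2 := EuclideanSpace ℝ (Fin 2)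
abbrev E3 := EuclideanSpace ℝ (Fin 3)
abbrev E4 := EuclideanSpace ℝ (Fin 4)

/-- The point `(a,b,c)` of `ℝ³`. -/
def mk3 (a b c : ℝ) : E3 := (WithLp.equiv 2 (Fin 3 → ℝ)).symm ![a, b, c]

/-- The Heisenberg distance on `ℝ³`:
`d_H(p,q) = |x−x′| + |y−y′| + |z−z′+(xy′−x′y)/2|^{1/2}`. -/
def dH (p q : E3) : ℝ :=
  |p 0 - q 0| + |p 1 - q 1| + Real.sqrt |p 2 - q 2 + (p 0 * q 1 - q 0 * p 1) / 2|

/-!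
In polar form the distance splits as `dH = (|X| + |Y|) + √(t₁ t₂ |s₁ × s₂| / 2)`, where
`(X, Y) = t₁ s₁ - t₂ s₂` and `|X| + |Y|` is comparable to `‖t₁ s₁ - t₂ s₂‖`. The law of cosines
`‖t₁ s₁ - t₂ s₂‖² = (t₁ - t₂)² + t₁ t₂ d²`, with `d = ‖s₁ - s₂‖`, makes the Euclidean part comparable
to `|t₁ - t₂| + min t₁ t₂ * d`, and for unit vectors `(s₁ × s₂)² = d² (4 - d²) / 4`.
For `d ≤ 1` the cross product is comparable to `d`, so the square-root term supplies
`min t₁ t₂ * √d`; for `d ≥ 1` we have `√d ≤ d` and the Euclidean part dominates. `C = 5` works.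
-/

theorem le_two_mul_sqrt {x : ℝ} (h0 : 0 ≤ x) (h4 : x ≤ 4) : x ≤ 2 * √x := by
  have hsqrt_le : √x ≤ 2 := (Real.sqrt_le_left zero_le_two).2 (by linarith)
  nlinarith [Real.sq_sqrt h0, Real.sqrt_nonneg x]

theorem min_sq_le_mul {t₁ t₂ : ℝ} (ht₁ : 0 ≤ t₁) (ht₂ : 0 ≤ t₂) : min t₁ t₂ ^ 2 ≤ t₁ * t₂ := by
  rw [sq]; exact mul_le_mul (min_le_left _ _) (min_le_right _ _) (le_min ht₁ ht₂) ht₁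

theorem mul_eq_min_mul_min_add_abs_sub (t₁ t₂ : ℝ) :
    t₁ * t₂ = min t₁ t₂ * (min t₁ t₂ + |t₁ - t₂|) := by
  rw [← min_mul_max, abs_sub_comm, ← max_sub_min_eq_abs, add_sub_cancel]

section NormedSpace

variable {V : Type*} [SeminormedAddCommGroup V] {s₁ s₂ : V}

theorem norm_sub_le_two (h₁ : ‖s₁‖ ≤ 1) (h₂ : ‖s₂‖ ≤ 1) : ‖s₁ - s₂‖ ≤ 2 :=
  (norm_sub_le s₁ s₂).trans (by linarith)

variable [NormedSpace ℝ V] {t₁ t₂ : ℝ}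

theorem norm_smul_sub_smul_le_abs_sub_add (h₂ : ‖s₂‖ ≤ 1) (ht₁ : 0 ≤ t₁) :
    ‖t₁ • s₁ - t₂ • s₂‖ ≤ |t₁ - t₂| + t₁ * ‖s₁ - s₂‖ :=
  calc ‖t₁ • s₁ - t₂ • s₂‖ = ‖(t₁ - t₂) • s₂ + t₁ • (s₁ - s₂)‖ := by
        rw [sub_smul, smul_sub]; abel_nf
    _ ≤ |t₁ - t₂| * ‖s₂‖ + t₁ * ‖s₁ - s₂‖ := by
        refine (norm_add_le _ _).trans_eq ?_
        rw [norm_smul, norm_smul, Real.norm_eq_abs, Real.norm_of_nonneg ht₁]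
    _ ≤ |t₁ - t₂| + t₁ * ‖s₁ - s₂‖ := by
        gcongr; exact mul_le_of_le_one_right (abs_nonneg _) h₂

theorem norm_smul_sub_smul_le (h₁ : ‖s₁‖ ≤ 1) (h₂ : ‖s₂‖ ≤ 1) (ht₁ : 0 ≤ t₁) (ht₂ : 0 ≤ t₂) :
    ‖t₁ • s₁ - t₂ • s₂‖ ≤ |t₁ - t₂| + min t₁ t₂ * ‖s₁ - s₂‖ := by
  rw [min_mul_of_nonneg _ _ (norm_nonneg _), ← min_add_add_left]
  refine le_min (norm_smul_sub_smul_le_abs_sub_add h₂ ht₁) ?_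
  rw [norm_sub_rev, abs_sub_comm, norm_sub_rev s₁]
  exact norm_smul_sub_smul_le_abs_sub_add h₁ ht₂

theorem abs_sub_le_norm_smul_sub_smul (h₁ : ‖s₁‖ = 1) (h₂ : ‖s₂‖ = 1) (ht₁ : 0 ≤ t₁)
    (ht₂ : 0 ≤ t₂) : |t₁ - t₂| ≤ ‖t₁ • s₁ - t₂ • s₂‖ := by
  simpa [norm_smul, h₁, h₂, abs_of_nonneg ht₁, abs_of_nonneg ht₂] using
    abs_norm_sub_norm_le (t₁ • s₁) (t₂ • s₂)

end NormedSpace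

section InnerProductSpace

variable {F : Type*} [NormedAddCommGroup F] [InnerProductSpace ℝ F] {s₁ s₂ : F}

theorem norm_smul_sub_smul_sq (h₁ : ‖s₁‖ = 1) (h₂ : ‖s₂‖ = 1) (t₁ t₂ : ℝ) :
    ‖t₁ • s₁ - t₂ • s₂‖ ^ 2 = (t₁ - t₂) ^ 2 + t₁ * t₂ * ‖s₁ - s₂‖ ^ 2 := by
  rw [norm_sub_sq_real, norm_sub_sq_real, norm_smul, norm_smul, real_inner_smul_left,
    real_inner_smul_right, h₁, h₂, Real.norm_eq_abs, Real.norm_eq_abs, mul_pow, mul_pow, sq_abs,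
    sq_abs]
  ring

theorem min_mul_norm_sub_le_norm_smul_sub_smul (h₁ : ‖s₁‖ = 1) (h₂ : ‖s₂‖ = 1) {t₁ t₂ : ℝ}
    (ht₁ : 0 ≤ t₁) (ht₂ : 0 ≤ t₂) : min t₁ t₂ * ‖s₁ - s₂‖ ≤ ‖t₁ • s₁ - t₂ • s₂‖ := by
  refine (pow_le_pow_iff_left₀ (by positivity) (norm_nonneg _) two_ne_zero).1 ?_
  rw [norm_smul_sub_smul_sq h₁ h₂, mul_pow]
  nlinarith [min_sq_le_mul ht₁ ht₂, sq_nonneg (t₁ - t₂), sq_nonneg ‖s₁ - s₂‖]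

end InnerProductSpace

namespace E2

theorem norm_le_abs_apply_zero_add_abs_apply_one (v : E2) : ‖v‖ ≤ |v 0| + |v 1| := by
  refine (sq_le_sq₀ (norm_nonneg _) (by positivity)).1 ?_
  rw [EuclideanSpace.real_norm_sq_eq, Fin.sum_univ_two, ← sq_abs (v 0), ← sq_abs (v 1)]
  nlinarith [abs_nonneg (v 0), abs_nonneg (v 1)]

theorem abs_apply_zero_add_abs_apply_one_le (v : E2) : |v 0| + |v 1| ≤ 2 * ‖v‖ := by
  have h0 := PiLp.norm_apply_le v 0
  have h1 := PiLp.norm_apply_le v 1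
  rw [Real.norm_eq_abs] at h0 h1
  linarith

def cross (s₁ s₂ : E2) : ℝ := s₁ 0 * s₂ 1 - s₂ 0 * s₁ 1

theorem cross_sq_add_inner_sq (s₁ s₂ : E2) :
    cross s₁ s₂ ^ 2 + inner ℝ s₁ s₂ ^ 2 = ‖s₁‖ ^ 2 * ‖s₂‖ ^ 2 := by
  simp only [cross, PiLp.inner_apply, EuclideanSpace.real_norm_sq_eq, Fin.sum_univ_two,
    RCLike.inner_apply, conj_trivial]
  ring

variable {s₁ s₂ : E2} {t₁ t₂ : ℝ}

theorem cross_sq_of_norm_eq_one (h₁ : ‖s₁‖ = 1) (h₂ : ‖s₂‖ = 1) :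
    cross s₁ s₂ ^ 2 = ‖s₁ - s₂‖ ^ 2 * (4 - ‖s₁ - s₂‖ ^ 2) / 4 := by
  have hinner : inner ℝ s₁ s₂ = 1 - ‖s₁ - s₂‖ ^ 2 / 2 := by
    rw [norm_sub_sq_real, h₁, h₂]; ring
  have hlagrange := cross_sq_add_inner_sq s₁ s₂
  rw [hinner, h₁, h₂] at hlagrange
  linear_combination hlagrange

theorem abs_cross_le (h₁ : ‖s₁‖ = 1) (h₂ : ‖s₂‖ = 1) : |cross s₁ s₂| ≤ ‖s₁ - s₂‖ := by
  refine abs_le_of_sq_le_sq ?_ (norm_nonneg _)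
  rw [cross_sq_of_norm_eq_one h₁ h₂]
  nlinarith [sq_nonneg (‖s₁ - s₂‖ ^ 2)]

theorem norm_sub_le_two_mul_abs_cross (h₁ : ‖s₁‖ = 1) (h₂ : ‖s₂‖ = 1)
    (h : ‖s₁ - s₂‖ ≤ 1) : ‖s₁ - s₂‖ ≤ 2 * |cross s₁ s₂| := by
  refine (sq_le_sq₀ (norm_nonneg _) (by positivity)).1 ?_
  have hsq : ‖s₁ - s₂‖ ^ 2 ≤ 1 := pow_le_one₀ (norm_nonneg _) h
  rw [mul_pow, sq_abs, cross_sq_of_norm_eq_one h₁ h₂]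
  nlinarith [sq_nonneg ‖s₁ - s₂‖]

theorem sqrt_mul_abs_cross_le (h₁ : ‖s₁‖ = 1) (h₂ : ‖s₂‖ = 1) (ht₁ : 0 ≤ t₁) (ht₂ : 0 ≤ t₂) :
    √(t₁ * t₂ * |cross s₁ s₂| / 2) ≤ |t₁ - t₂| + min t₁ t₂ * √‖s₁ - s₂‖ := by
  have hm : 0 ≤ min t₁ t₂ := le_min ht₁ ht₂
  have hsqrt_sq : √‖s₁ - s₂‖ ^ 2 = ‖s₁ - s₂‖ := Real.sq_sqrt (norm_nonneg _)
  have hsqrt_le : √‖s₁ - s₂‖ ≤ 2 :=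
    (Real.sqrt_le_left zero_le_two).2 (by linarith [norm_sub_le_two h₁.le h₂.le])
  have hcross : t₁ * t₂ * |cross s₁ s₂| ≤ min t₁ t₂ * (min t₁ t₂ + |t₁ - t₂|) * ‖s₁ - s₂‖ := by
    rw [← mul_eq_min_mul_min_add_abs_sub]
    exact mul_le_mul_of_nonneg_left (abs_cross_le h₁ h₂) (mul_nonneg ht₁ ht₂)
  rw [Real.sqrt_le_left (by positivity)]
  calc t₁ * t₂ * |cross s₁ s₂| / 2
      ≤ min t₁ t₂ * (min t₁ t₂ + |t₁ - t₂|) * √‖s₁ - s₂‖ ^ 2 / 2 := by rw [hsqrt_sq]; linarith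
    _ ≤ (|t₁ - t₂| + min t₁ t₂ * √‖s₁ - s₂‖) ^ 2 := by
      nlinarith [sq_nonneg |t₁ - t₂|, sq_nonneg (min t₁ t₂ * √‖s₁ - s₂‖),
        mul_nonneg (mul_nonneg (mul_nonneg hm (abs_nonneg (t₁ - t₂))) (Real.sqrt_nonneg ‖s₁ - s₂‖))
          (sub_nonneg.2 hsqrt_le)]

theorem min_mul_sqrt_le_two_mul_sqrt (h₁ : ‖s₁‖ = 1) (h₂ : ‖s₂‖ = 1) (ht₁ : 0 ≤ t₁)
    (ht₂ : 0 ≤ t₂) (h : ‖s₁ - s₂‖ ≤ 1) :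
    min t₁ t₂ * √‖s₁ - s₂‖ ≤ 2 * √(t₁ * t₂ * |cross s₁ s₂| / 2) := by
  refine (sq_le_sq₀ (by positivity) (by positivity)).1 ?_
  rw [mul_pow, mul_pow, Real.sq_sqrt (norm_nonneg _), Real.sq_sqrt (by positivity)]
  have := mul_le_mul (min_sq_le_mul ht₁ ht₂) (norm_sub_le_two_mul_abs_cross h₁ h₂ h)
    (norm_nonneg _) (mul_nonneg ht₁ ht₂)
  linarith

end E2

theorem dH_mk3_zero (a b a' b' : ℝ) :
    dH (mk3 a b 0) (mk3 a' b' 0) = |a - a'| + |b - b'| + √(|a * b' - a' * b| / 2) := by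
  simp [dH, mk3, abs_div]

theorem dH_mk3_smul (s₁ s₂ : E2) {t₁ t₂ : ℝ} (ht : 0 ≤ t₁ * t₂) :
    dH (mk3 (t₁ * s₁ 0) (t₁ * s₁ 1) 0) (mk3 (t₂ * s₂ 0) (t₂ * s₂ 1) 0) =
      |(t₁ • s₁ - t₂ • s₂) 0| + |(t₁ • s₁ - t₂ • s₂) 1| + √(t₁ * t₂ * |E2.cross s₁ s₂| / 2) := by
  rw [dH_mk3_zero, E2.cross, ← abs_of_nonneg ht, ← abs_mul]
  simp only [PiLp.sub_apply, PiLp.smul_apply, smul_eq_mul]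
  ring_nf

/-- There is a universal constant `C ≥ 1` such that for all unit vectors
`s₁, s₂ ∈ S¹ ⊂ ℝ²`, all `t₁, t₂ ≥ 0`, and `w₁ = (t₁s₁, 0)`, `w₂ = (t₂s₂, 0)` in the plane
`{z = 0}`:
`C⁻¹ (|t₁−t₂| + min(t₁,t₂)|s₁−s₂|^{1/2}) ≤ d_H(w₁,w₂) ≤ C (|t₁−t₂| + min(t₁,t₂)|s₁−s₂|^{1/2})`. -/
theorem dH_plane_z_eq_zero_polar :
    ∃ C : ℝ, 1 ≤ C ∧
      ∀ (s₁ s₂ : E2), ‖s₁‖ = 1 → ‖s₂‖ = 1 →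
        ∀ (t₁ t₂ : ℝ), 0 ≤ t₁ → 0 ≤ t₂ →
          C⁻¹ * (|t₁ - t₂| + min t₁ t₂ * Real.sqrt ‖s₁ - s₂‖) ≤
              dH (mk3 (t₁ * s₁ 0) (t₁ * s₁ 1) 0) (mk3 (t₂ * s₂ 0) (t₂ * s₂ 1) 0) ∧
            dH (mk3 (t₁ * s₁ 0) (t₁ * s₁ 1) 0) (mk3 (t₂ * s₂ 0) (t₂ * s₂ 1) 0) ≤
              C * (|t₁ - t₂| + min t₁ t₂ * Real.sqrt ‖s₁ - s₂‖) := by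
  refine ⟨5, by norm_num, fun s₁ s₂ h₁ h₂ t₁ t₂ ht₁ ht₂ => ?_⟩
  rw [dH_mk3_smul s₁ s₂ (mul_nonneg ht₁ ht₂)]
  set v := t₁ • s₁ - t₂ • s₂
  set S := √(t₁ * t₂ * |E2.cross s₁ s₂| / 2)
  set d := ‖s₁ - s₂‖
  have hm : 0 ≤ min t₁ t₂ := le_min ht₁ ht₂
  have hS : 0 ≤ S := Real.sqrt_nonneg _
  have lower : |t₁ - t₂| + min t₁ t₂ * √d ≤ 2 * (|v 0| + |v 1| + S) := by
    have hv : ‖v‖ ≤ |v 0| + |v 1| := E2.norm_le_abs_apply_zero_add_abs_apply_one v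
    have hu : |t₁ - t₂| ≤ ‖v‖ := abs_sub_le_norm_smul_sub_smul h₁ h₂ ht₁ ht₂
    rcases le_total d 1 with hd | hd
    · have hS_ge : min t₁ t₂ * √d ≤ 2 * S := E2.min_mul_sqrt_le_two_mul_sqrt h₁ h₂ ht₁ ht₂ hd
      linarith [abs_nonneg (v 0), abs_nonneg (v 1)]
    · have hsqrt : √d ≤ d := (Real.sqrt_le_left (by linarith)).2 (by nlinarith)
      have hmd : min t₁ t₂ * d ≤ ‖v‖ := min_mul_norm_sub_le_norm_smul_sub_smul h₁ h₂ ht₁ ht₂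
      linarith [mul_le_mul_of_nonneg_left hsqrt hm]
  have hd : min t₁ t₂ * d ≤ 2 * (min t₁ t₂ * √d) := by
    rw [mul_left_comm]
    exact mul_le_mul_of_nonneg_left
      (le_two_mul_sqrt (norm_nonneg _) (by linarith [norm_sub_le_two h₁.le h₂.le])) hm
  constructor
  · linarith [abs_nonneg (v 0), abs_nonneg (v 1)]
  · have hv : ‖v‖ ≤ |t₁ - t₂| + min t₁ t₂ * d := norm_smul_sub_smul_le h₁.le h₂.le ht₁ ht₂
    have hS_le : S ≤ |t₁ - t₂| + min t₁ t₂ * √d := E2.sqrt_mul_abs_cross_le h₁ h₂ ht₁ ht₂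
    have hH : |v 0| + |v 1| ≤ 2 * ‖v‖ := E2.abs_apply_zero_add_abs_apply_one_le v
    linarith [abs_nonneg (t₁ - t₂)]
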